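/- arXiv:2106.11745 — 4 statements merged into one kernel-verified Lean document; each statement's English description precedes it below -/
import Mathlib

section
/- Assume R_0 < 1/σ with σ ∈ (0,1), R_0 > 1, μ > 0, and define φ_{0c} = μ(R_0 − 1)/(1 − σR_0). Then R_V(φ_0) = R_0(μ+σφ_0)/(μ+φ_0) < 1 if and only if φ_0 > φ_{0c}. Moreover, if R_0 ≥ 1/σ, then R_V(φ_0) > 1 for all φ_0 ≥ 0. -/
/-- If R_0 < 1/σ (σ ∈ (0,1), R_0 > 1, μ > 0) then R_V(φ_0) < 1 iff φ_0 > φ_{0c}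
with φ_{0c} = μ(R_0−1)/(1−σR_0); moreover if R_0 ≥ 1/σ then R_V(φ_0) > 1 for all
φ_0 ≥ 0. -/
theorem stmt6 (μ σ R0 : ℝ) (hμ : 0 < μ) (hσ : 0 < σ) (hσ1 : σ < 1) (hR0 : 1 < R0) :
    ((R0 < 1 / σ → ∀ φ0 ≥ (0 : ℝ),
      (R0 * (μ + σ * φ0) / (μ + φ0) < 1 ↔ φ0 > μ * (R0 - 1) / (1 - σ * R0))) ∧
     (1 / σ ≤ R0 → ∀ φ0 ≥ (0 : ℝ), 1 < R0 * (μ + σ * φ0) / (μ + φ0))) := by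
  constructor
  · intro h φ0 hφ0
    have hden : 0 < μ + φ0 := by linarith
    have hσR : 0 < 1 - σ * R0 := by
      have h' : R0 * σ < 1 := by rw [lt_div_iff₀ hσ] at h; exact h
      nlinarith
    rw [div_lt_one hden, gt_iff_lt, div_lt_iff₀ hσR]
    constructor <;> intro hh <;> nlinarith
  · intro h φ0 hφ0
    have hden : 0 < μ + φ0 := by linarith
    have hσR : 1 ≤ σ * R0 := by
      rw [div_le_iff₀ hσ] at h; linarith
    rw [lt_div_iff₀ hden]
    nlinarith
end

section
/- Let L = E + ((ρ+μ)[(ε_a(ν_s+δ+μ)+ε_sη)I_a + ε_s(η+ν_a+μ)I_s])/(ρ(ε_a(ν_s+δ+μ)+ε_sη)). Along solutions of the model with S + σV ≤ Λ(μ+σφ_0)/(μ(μ+φ_0)), the time derivative satisfies L' = (ε_aI_a+ε_sI_s)[β(S+σV) − ((ρ+μ)(η+ν_a+μ)(ν_s+δ+μ))/(ρ(ε_a(ν_s+δ+μ)+ε_sη))] ≤ −(ε_aI_a+ε_sI_s)·((ρ+μ)(η+ν_a+μ)(ν_s+δ+μ))/(ρ(ε_a(ν_s+δ+μ)+ε_sη))·(1−R_V);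 in particular L' ≤ 0 whenever R_V ≤ 1 and I_a, I_s ≥ 0. -/
/-- The Lyapunov function L = E + ((ρ+μ)[(ε_a(ν_s+δ+μ)+ε_sη)I_a + ε_s(η+ν_a+μ)I_s])
/(ρ(ε_a(ν_s+δ+μ)+ε_sη)) satisfies, along solutions with
S + σV ≤ Λ(μ+σφ_0)/(μ(μ+φ_0)),
L' = (ε_aI_a+ε_sI_s)[β(S+σV) − (ρ+μ)(η+ν_a+μ)(ν_s+δ+μ)/(ρ(ε_a(ν_s+δ+μ)+ε_sη))]
    ≤ −(ε_aI_a+ε_sI_s)·(ρ+μ)(η+ν_a+μ)(ν_s+δ+μ)/(ρ(ε_a(ν_s+δ+μ)+ε_sη))·(1−R_V),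
and L' ≤ 0 whenever R_V ≤ 1. -/
theorem stmt9 (Λ μ β ρ η νa νs δ φ0 σ εa εs RV : ℝ)
    (S E Ia Is V : ℝ → ℝ) (t : ℝ)
    (hΛ : 0 < Λ) (hμ : 0 < μ) (hβ : 0 < β) (hρ : 0 < ρ) (hη : 0 < η)
    (hνa : 0 < νa) (hνs : 0 < νs) (hδ : 0 < δ) (hφ0 : 0 < φ0)
    (hσ : 0 ≤ σ) (hσ1 : σ < 1)
    (hεa : 0 ≤ εa) (hεa1 : εa < 1) (hεs : 0 ≤ εs) (hεs1 : εs < 1)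
    (hεpos : 0 < εa * (νs + δ + μ) + εs * η)
    (hRV : RV = ρ * β * (εa * (νs + δ + μ) + εs * η) * Λ * (μ + σ * φ0) /
      ((ρ + μ) * (η + νa + μ) * (νs + δ + μ) * μ * (μ + φ0)))
    (hE : HasDerivAt E
      (β * (S t + σ * V t) * (εa * Ia t + εs * Is t) - (ρ + μ) * E t) t)
    (hIa : HasDerivAt Ia (ρ * E t - (η + νa + μ) * Ia t) t)
    (hIs : HasDerivAt Is (η * Ia t - (νs + δ + μ) * Is t) t)
    (hbound : S t + σ * V t ≤ Λ * (μ + σ * φ0) / (μ * (μ + φ0)))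
    (hIa0 : 0 ≤ Ia t) (hIs0 : 0 ≤ Is t) :
    HasDerivAt (fun τ => E τ + (ρ + μ) *
        ((εa * (νs + δ + μ) + εs * η) * Ia τ + εs * (η + νa + μ) * Is τ) /
        (ρ * (εa * (νs + δ + μ) + εs * η)))
      ((εa * Ia t + εs * Is t) * (β * (S t + σ * V t) -
        (ρ + μ) * (η + νa + μ) * (νs + δ + μ) /
          (ρ * (εa * (νs + δ + μ) + εs * η)))) t ∧
    (εa * Ia t + εs * Is t) * (β * (S t + σ * V t) -
        (ρ + μ) * (η + νa + μ) * (νs + δ + μ) /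
          (ρ * (εa * (νs + δ + μ) + εs * η))) ≤
      -((εa * Ia t + εs * Is t) * ((ρ + μ) * (η + νa + μ) * (νs + δ + μ) /
          (ρ * (εa * (νs + δ + μ) + εs * η))) * (1 - RV)) ∧
    (RV ≤ 1 → (εa * Ia t + εs * Is t) * (β * (S t + σ * V t) -
        (ρ + μ) * (η + νa + μ) * (νs + δ + μ) /
          (ρ * (εa * (νs + δ + μ) + εs * η))) ≤ 0) := by
  have hA : (0:ℝ) < εa * (νs + δ + μ) + εs * η := hεpos
  have hAne : (εa * (νs + δ + μ) + εs * η) ≠ 0 := ne_of_gt hA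
  have hρne : ρ ≠ 0 := ne_of_gt hρ
  -- derivative part
  have hderiv : HasDerivAt (fun τ => E τ + (ρ + μ) *
        ((εa * (νs + δ + μ) + εs * η) * Ia τ + εs * (η + νa + μ) * Is τ) /
        (ρ * (εa * (νs + δ + μ) + εs * η)))
      ((εa * Ia t + εs * Is t) * (β * (S t + σ * V t) -
        (ρ + μ) * (η + νa + μ) * (νs + δ + μ) /
          (ρ * (εa * (νs + δ + μ) + εs * η)))) t := by
    have h1 := ((hIa.const_mul (εa * (νs + δ + μ) + εs * η)).add
      (hIs.const_mul (εs * (η + νa + μ)))).const_mul (ρ + μ)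
    have h2 := hE.add (h1.div_const (ρ * (εa * (νs + δ + μ) + εs * η)))
    refine h2.congr_deriv ?_
    field_simp
    ring
  refine ⟨hderiv, ?_, ?_⟩
  · have hfac : 0 ≤ εa * Ia t + εs * Is t :=
      add_nonneg (mul_nonneg hεa hIa0) (mul_nonneg hεs hIs0)
    have hK : (0:ℝ) < (ρ + μ) * (η + νa + μ) * (νs + δ + μ) /
        (ρ * (εa * (νs + δ + μ) + εs * η)) := by positivity
    have hrhs : -((εa * Ia t + εs * Is t) * ((ρ + μ) * (η + νa + μ) * (νs + δ + μ) /
          (ρ * (εa * (νs + δ + μ) + εs * η))) * (1 - RV))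
        = (εa * Ia t + εs * Is t) * (((ρ + μ) * (η + νa + μ) * (νs + δ + μ) /
          (ρ * (εa * (νs + δ + μ) + εs * η))) * RV -
          ((ρ + μ) * (η + νa + μ) * (νs + δ + μ) /
          (ρ * (εa * (νs + δ + μ) + εs * η)))) := by ring
    rw [hrhs]
    apply mul_le_mul_of_nonneg_left _ hfac
    have hKRV : ((ρ + μ) * (η + νa + μ) * (νs + δ + μ) /
          (ρ * (εa * (νs + δ + μ) + εs * η))) * RV
        = β * (Λ * (μ + σ * φ0) / (μ * (μ + φ0))) := by
      rw [hRV]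
      field_simp
      have hA' : (νs + δ + μ) * εa + η * εs ≠ 0 := by contrapose! hAne; linarith
      field_simp
    have hb : β * (S t + σ * V t) ≤ β * (Λ * (μ + σ * φ0) / (μ * (μ + φ0))) :=
      mul_le_mul_of_nonneg_left hbound (le_of_lt hβ)
    rw [hKRV]
    linarith
  · intro hRV1
    have hfac : 0 ≤ εa * Ia t + εs * Is t :=
      add_nonneg (mul_nonneg hεa hIa0) (mul_nonneg hεs hIs0)
    have hK : (0:ℝ) < (ρ + μ) * (η + νa + μ) * (νs + δ + μ) /
        (ρ * (εa * (νs + δ + μ) + εs * η)) := by positivity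
    have h2 : -((εa * Ia t + εs * Is t) * ((ρ + μ) * (η + νa + μ) * (νs + δ + μ) /
          (ρ * (εa * (νs + δ + μ) + εs * η))) * (1 - RV)) ≤ 0 := by
      have : 0 ≤ (εa * Ia t + εs * Is t) * ((ρ + μ) * (η + νa + μ) * (νs + δ + μ) /
          (ρ * (εa * (νs + δ + μ) + εs * η))) * (1 - RV) :=
        mul_nonneg (mul_nonneg hfac (le_of_lt hK)) (by linarith)
      linarith
    have h1 : (εa * Ia t + εs * Is t) * (β * (S t + σ * V t) -
        (ρ + μ) * (η + νa + μ) * (νs + δ + μ) /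
          (ρ * (εa * (νs + δ + μ) + εs * η))) ≤
      -((εa * Ia t + εs * Is t) * ((ρ + μ) * (η + νa + μ) * (νs + δ + μ) /
          (ρ * (εa * (νs + δ + μ) + εs * η))) * (1 - RV)) := by
      have hrhs : -((εa * Ia t + εs * Is t) * ((ρ + μ) * (η + νa + μ) * (νs + δ + μ) /
            (ρ * (εa * (νs + δ + μ) + εs * η))) * (1 - RV))
          = (εa * Ia t + εs * Is t) * (((ρ + μ) * (η + νa + μ) * (νs + δ + μ) /
            (ρ * (εa * (νs + δ + μ) + εs * η))) * RV -
            ((ρ + μ) * (η + νa + μ) * (νs + δ + μ) /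
            (ρ * (εa * (νs + δ + μ) + εs * η)))) := by ring
      rw [hrhs]
      apply mul_le_mul_of_nonneg_left _ hfac
      have hKRV : ((ρ + μ) * (η + νa + μ) * (νs + δ + μ) /
            (ρ * (εa * (νs + δ + μ) + εs * η))) * RV
          = β * (Λ * (μ + σ * φ0) / (μ * (μ + φ0))) := by
        rw [hRV]
        field_simp
        have hA' : (νs + δ + μ) * εa + η * εs ≠ 0 := by contrapose! hAne; linarith
        field_simp
      have hb : β * (S t + σ * V t) ≤ β * (Λ * (μ + σ * φ0) / (μ * (μ + φ0))) :=
        mul_le_mul_of_nonneg_left hbound (le_of_lt hβ)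
      rw [hKRV]
      linarith
    linarith
end

section
/- With I_a* = μ(σR_0 − 1)(ν_s+δ+μ)/(σβ(ε_a(ν_s+δ+μ)+ε_sη)) and ψ as in the endemic equilibrium equation, one has ψ(I_a*) = μ²R_0(1−σ)(ν_s+δ+μ)² > 0 and ψ'(I_a*) = −β(ν_s+δ+μ)(μ(σR_0−1)+σ(μ+φ_0))(ε_a(ν_s+δ+μ)+ε_sη), which is negative whenever σR_0 > 1. -/
/-- Substituting I_a* = μ(σR_0−1)(ν_s+δ+μ)/(σβ(ε_a(ν_s+δ+μ)+ε_sη)) into the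
endemic quadratic ψ gives ψ(I_a*) = μ²R_0(1−σ)(ν_s+δ+μ)² > 0 and
ψ'(I_a*) = −β(ν_s+δ+μ)(μ(σR_0−1)+σ(μ+φ_0))(ε_a(ν_s+δ+μ)+ε_sη), which is
negative whenever σR_0 > 1. -/
theorem stmt11 (β μ φ0 νs δ η εa εs σ R0 : ℝ)
    (hβ : 0 < β) (hμ : 0 < μ) (hφ0 : 0 < φ0) (hνs : 0 < νs) (hδ : 0 < δ)
    (hη : 0 < η) (hR0 : 0 < R0) (hσ : 0 < σ) (hσ1 : σ < 1)
    (hεa : 0 ≤ εa) (hεa1 : εa < 1) (hεs : 0 ≤ εs) (hεs1 : εs < 1)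
    (hεpos : 0 < εa * (νs + δ + μ) + εs * η)
    (ψ : ℝ → ℝ)
    (hψ : ψ = fun x => (-(σ * β ^ 2 * (εa * (νs + δ + μ) + εs * η) ^ 2)) * x ^ 2 +
      (-(β * (μ * (1 - σ * R0) + σ * (μ + φ0)) * (νs + δ + μ) *
        (εa * (νs + δ + μ) + εs * η))) * x +
      μ * (νs + δ + μ) ^ 2 * ((μ + σ * φ0) * R0 - μ - φ0))
    (Iastar : ℝ)
    (hIastar : Iastar = μ * (σ * R0 - 1) * (νs + δ + μ) /
      (σ * β * (εa * (νs + δ + μ) + εs * η))) :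
    ψ Iastar = μ ^ 2 * R0 * (1 - σ) * (νs + δ + μ) ^ 2 ∧
    0 < ψ Iastar ∧
    deriv ψ Iastar = -(β * (νs + δ + μ) * (μ * (σ * R0 - 1) + σ * (μ + φ0)) *
      (εa * (νs + δ + μ) + εs * η)) ∧
    (1 < σ * R0 → deriv ψ Iastar < 0) := by
  have hε := hεpos.ne'
  have hσ' := hσ.ne'
  have hβ' := hβ.ne'
  have hval : ψ Iastar = μ ^ 2 * R0 * (1 - σ) * (νs + δ + μ) ^ 2 := by
    subst hψ hIastar
    simp only
    field_simp
    ring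
  have hd : deriv ψ Iastar = -(β * (νs + δ + μ) * (μ * (σ * R0 - 1) + σ * (μ + φ0)) *
      (εa * (νs + δ + μ) + εs * η)) := by
    have hder : HasDerivAt ψ
        ((-(σ * β ^ 2 * (εa * (νs + δ + μ) + εs * η) ^ 2)) * (2 * Iastar) +
          (-(β * (μ * (1 - σ * R0) + σ * (μ + φ0)) * (νs + δ + μ) *
            (εa * (νs + δ + μ) + εs * η)))) Iastar := by
      subst hψ
      have h1 := ((hasDerivAt_pow 2 Iastar).const_mul
        (-(σ * β ^ 2 * (εa * (νs + δ + μ) + εs * η) ^ 2)))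
      have h2 := (hasDerivAt_id Iastar).const_mul
        (-(β * (μ * (1 - σ * R0) + σ * (μ + φ0)) * (νs + δ + μ) *
          (εa * (νs + δ + μ) + εs * η)))
      have h3 := (h1.add h2).add_const (μ * (νs + δ + μ) ^ 2 * ((μ + σ * φ0) * R0 - μ - φ0))
      refine h3.congr_deriv ?_
      push_cast
      ring
    rw [hder.deriv, hIastar]
    field_simp
    ring
  refine ⟨hval, ?_, hd, ?_⟩
  · rw [hval]
    have : 0 < 1 - σ := by linarith
    positivity
  · intro h
    rw [hd]
    have h1 : 0 < μ * (σ * R0 - 1) + σ * (μ + φ0) := by nlinarith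
    have h2 : 0 < νs + δ + μ := by linarith
    nlinarith [mul_pos (mul_pos (mul_pos hβ h2) h1) hεpos]
end

section
/- The transcritical-bifurcation coefficient B = v_2·(Λ(μ+σφ_0)/(μ(μ+φ_0)))·(ε_a(ν_s+δ+μ)+ε_sη)/(ν_s+δ+μ) is strictly positive, and A = −v_2β_c(ε_a(ν_s+δ+μ)+ε_sη)Λ·[(μ²+σφ_0(μ+σ(μ+φ_0)))β_c(ε_a(ν_s+δ+μ)+ε_sη) + (1−σ)kηφ_1'(0)μ²]/(μ²(μ+φ_0)²(ν_s+δ+μ)²) is strictly negative, given v_2 > 0, β_c > 0, σ ∈ [0,1), k > 0, η > 0, φ_1'(0) ≥ 0, and all other parameters positive with ε_a(ν_s+δ+μ)+ε_sη > 0. -/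
/-- The normal-form coefficients of the transcritical bifurcation at R_V = 1
satisfy B > 0 and A < 0 (forward bifurcation). -/
theorem stmt17 (Λ μ νs δ η εa εs σ φ0 k βc v2 φ1'0 A B : ℝ)
    (hΛ : 0 < Λ) (hμ : 0 < μ) (hνs : 0 < νs) (hδ : 0 < δ) (hη : 0 < η)
    (hφ0 : 0 < φ0) (hσ : 0 ≤ σ) (hσ1 : σ < 1) (hk : 0 < k)
    (hεa : 0 ≤ εa) (hεs : 0 ≤ εs) (hεpos : 0 < εa * (νs + δ + μ) + εs * η)
    (hβc : 0 < βc) (hv2 : 0 < v2) (hφ1' : 0 ≤ φ1'0)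
    (hB : B = v2 * (Λ * (μ + σ * φ0) / (μ * (μ + φ0))) *
      ((εa * (νs + δ + μ) + εs * η) / (νs + δ + μ)))
    (hA : A = -(v2 * βc * (εa * (νs + δ + μ) + εs * η) * Λ *
      ((μ ^ 2 + σ * φ0 * (μ + σ * (μ + φ0))) * βc * (εa * (νs + δ + μ) + εs * η) +
        (1 - σ) * k * η * φ1'0 * μ ^ 2) /
      (μ ^ 2 * (μ + φ0) ^ 2 * (νs + δ + μ) ^ 2))) :
    0 < B ∧ A < 0 := by
  have h1 : 0 < μ + σ * φ0 := by positivity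
  have h2 : 0 < νs + δ + μ := by positivity
  have h3 : 0 < μ ^ 2 + σ * φ0 * (μ + σ * (μ + φ0)) := by positivity
  have h4 : 0 ≤ (1 - σ) * k * η * φ1'0 * μ ^ 2 := by
    have : 0 ≤ 1 - σ := by linarith
    positivity
  have h5 : 0 < (μ ^ 2 + σ * φ0 * (μ + σ * (μ + φ0))) * βc *
      (εa * (νs + δ + μ) + εs * η) + (1 - σ) * k * η * φ1'0 * μ ^ 2 := by
    have : 0 < (μ ^ 2 + σ * φ0 * (μ + σ * (μ + φ0))) * βc *
        (εa * (νs + δ + μ) + εs * η) := by positivity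
    linarith
  constructor
  · rw [hB]; positivity
  · rw [hA]
    have : 0 < v2 * βc * (εa * (νs + δ + μ) + εs * η) * Λ *
      ((μ ^ 2 + σ * φ0 * (μ + σ * (μ + φ0))) * βc * (εa * (νs + δ + μ) + εs * η) +
        (1 - σ) * k * η * φ1'0 * μ ^ 2) /
      (μ ^ 2 * (μ + φ0) ^ 2 * (νs + δ + μ) ^ 2) := by positivity
    linarith
end
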